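/- arXiv:2603.04271 — 3 statements merged into one kernel-verified Lean document; each statement's English description precedes it below -/
import Mathlib

section
/- Let M be a tractable metric space and K a nonempty compact subset of M. Then the following are equivalent: (i) the map L ↦ mg(L), defined on the nonempty compact subsets of M equipped with the Hausdorff metric, is continuous at K; (ii) lim_{r↘0} mg(K_r) = mg(K), where K_r is the closed r-thickening of K in M; (iii) for every ε > 0 there exists δ > 0 such that mg(K_δ) < mg(K) + ε. -/
open MeasureTheory Metric Set Filter Topology TopologicalSpace

/-- The magnitude of a finite subset `F` of a metric space: the common value
`∑ p ∈ F, w p` over all weightings `w` (i.e. functions with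
`∑ q ∈ F, exp (-d p q) * w q = 1` for all `p ∈ F`), expressed as a supremum. -/
noncomputable def finMag {X : Type*} [MetricSpace X] (F : Finset X) : ℝ :=
  sSup {m : ℝ | ∃ w : X → ℝ,
    (∀ p ∈ F, ∑ q ∈ F, Real.exp (-dist p q) * w q = 1) ∧ m = ∑ p ∈ F, w p}

/-- The magnitude of a compact subset: the supremum of magnitudes of finite subsets. -/
noncomputable def cMag {X : Type*} [MetricSpace X] (K : Set X) : ℝ :=
  sSup {m : ℝ | ∃ F : Finset X, ↑F ⊆ K ∧ m = finMag F}

/-- A metric space is positive definite when the similarity matrix of every finite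
subset is positive definite. -/
def IsPosDefSpace (X : Type*) [MetricSpace X] : Prop :=
  ∀ F : Finset X, (Matrix.of fun p q : F => Real.exp (-dist (p : X) (q : X))).PosDef

/-- A metric space is tractable when it is positive definite and every closed ball
is compact and has finite magnitude. -/
def IsTractable (X : Type*) [MetricSpace X] : Prop :=
  IsPosDefSpace X ∧ ∀ (x : X) (r : ℝ), IsCompact (Metric.closedBall x r) ∧
    BddAbove {m : ℝ | ∃ F : Finset X, ↑F ⊆ Metric.closedBall x r ∧ m = finMag F}

/-!
For a finite subset `F` of a positive definite space with similarity matrix `Z`, Cauchy–Schwarz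
for the form `Z` shows `(∑ v)² / vᵀ Z v ≤ mg F` for every `v`, with equality at a weighting.
The bound survives moving the points of `F` (when moved points coincide, their coefficients
are added up), and `vᵀ Z v` depends continuously on the points, so a compact `L`
Hausdorff-close to `K` contains a finite set of magnitude almost `mg F`: magnitude is lower
semicontinuous. Since `d_H(L, K) ≤ δ` forces `L ⊆ K_δ`, condition (iii) is exactly upper
semicontinuity at `K`, and (i) ⇒ (ii) because `K_r → K` in the Hausdorff metric as `r → 0`.
-/

open Finset Matrix

section FiniteMagnitude

variable {X : Type*} [MetricSpace X] {ι : Type*}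

noncomputable def simForm (s : Finset ι) (φ : ι → X) (f g : ι → ℝ) : ℝ :=
  ∑ i ∈ s, f i * ∑ j ∈ s, Real.exp (-dist (φ i) (φ j)) * g j

noncomputable def simMatrix (F : Finset X) : Matrix F F ℝ :=
  Matrix.of fun p q : F => Real.exp (-dist (p : X) q)

theorem simForm_comm (s : Finset ι) (φ : ι → X) (f g : ι → ℝ) :
    simForm s φ f g = simForm s φ g f := by
  simp only [simForm, mul_sum]
  rw [sum_comm]
  refine sum_congr rfl fun i _ => sum_congr rfl fun j _ => ?_
  rw [dist_comm]
  ring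

theorem simForm_univ_val (F : Finset X) (f g : X → ℝ) :
    simForm univ (Subtype.val : F → X) (fun p : F => f p) (fun q : F => g q) =
      simForm F id f g := by
  simp only [simForm, id]
  rw [← sum_coe_sort F]
  exact sum_congr rfl fun p _ => by rw [← sum_coe_sort F]

theorem simForm_eq_dotProduct (F : Finset X) (f g : X → ℝ) :
    simForm F id f g = (fun p : F => f p) ⬝ᵥ simMatrix F *ᵥ (fun q : F => g q) :=
  (simForm_univ_val F f g).symm

variable (hX : IsPosDefSpace X)
include hX

theorem posDef_simMatrix (F : Finset X) : (simMatrix F).PosDef := hX F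

theorem simForm_self_nonneg (F : Finset X) (f : X → ℝ) : 0 ≤ simForm F id f f := by
  simpa [simForm_eq_dotProduct] using
    (posDef_simMatrix hX F).posSemidef.dotProduct_mulVec_nonneg (fun p : F => f p)

theorem simForm_mul_simForm_le (F : Finset X) (f g : X → ℝ) :
    simForm F id f g * simForm F id g f ≤ simForm F id f f * simForm F id g g := by
  classical
  simp only [simForm_eq_dotProduct, ← toBilin'_apply']
  refine LinearMap.BilinForm.apply_mul_apply_le_of_forall_zero_le _ (fun x => ?_) _ _
  simpa [toBilin'_apply'] using (posDef_simMatrix hX F).posSemidef.dotProduct_mulVec_nonneg x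

end FiniteMagnitude

section Weighting

variable {X : Type*} [MetricSpace X]

def IsWeighting (F : Finset X) (w : X → ℝ) : Prop :=
  ∀ p ∈ F, ∑ q ∈ F, Real.exp (-dist p q) * w q = 1

theorem IsWeighting.simForm_eq_sum {F : Finset X} {u : X → ℝ} (hu : IsWeighting F u)
    (f : X → ℝ) : simForm F id f u = ∑ p ∈ F, f p :=
  sum_congr rfl fun p hp => by simp only [id, hu p hp, mul_one]

theorem IsWeighting.finMag_eq_sum {F : Finset X} {u : X → ℝ} (hu : IsWeighting F u) :
    finMag F = ∑ p ∈ F, u p := by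
  have h :
      {m : ℝ | ∃ w : X → ℝ, IsWeighting F w ∧ m = ∑ p ∈ F, w p} = {∑ p ∈ F, u p} := by
    refine Set.eq_singleton_iff_unique_mem.2 ⟨⟨u, hu, rfl⟩, ?_⟩
    rintro _ ⟨w, hw, rfl⟩
    rw [← hu.simForm_eq_sum, simForm_comm, hw.simForm_eq_sum]
  exact (congrArg sSup h).trans (csSup_singleton _)

theorem IsWeighting.finMag_eq_simForm {F : Finset X} {u : X → ℝ} (hu : IsWeighting F u) :
    finMag F = simForm F id u u := by
  rw [hu.finMag_eq_sum, hu.simForm_eq_sum]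

variable (hX : IsPosDefSpace X)
include hX

theorem exists_isWeighting (F : Finset X) : ∃ u : X → ℝ, IsWeighting F u := by
  classical
  obtain ⟨x, hx⟩ :=
    mulVec_surjective_iff_isUnit.2 (posDef_simMatrix hX F).isUnit (fun _ => 1)
  refine ⟨fun q => if h : q ∈ F then x ⟨q, h⟩ else 0, fun p hp => ?_⟩
  rw [← sum_coe_sort F, ← congrFun hx ⟨p, hp⟩]
  simp [mulVec, dotProduct, simMatrix]

theorem finMag_nonneg (F : Finset X) : 0 ≤ finMag F := by
  obtain ⟨u, hu⟩ := exists_isWeighting hX F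
  rw [hu.finMag_eq_simForm]
  exact simForm_self_nonneg hX F u

theorem sq_sum_le_finMag_mul_simForm (F : Finset X) (f : X → ℝ) :
    (∑ p ∈ F, f p) ^ 2 ≤ finMag F * simForm F id f f := by
  obtain ⟨u, hu⟩ := exists_isWeighting hX F
  have h := simForm_mul_simForm_le hX F f u
  rw [simForm_comm F id u f, hu.simForm_eq_sum, ← hu.finMag_eq_simForm, ← sq] at h
  exact h.trans_eq (mul_comm _ _)

end Weighting

section Perturbation

variable {X : Type*} [MetricSpace X] {ι κ : Type*} [DecidableEq κ] [DecidableEq X]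

theorem sum_image_sum_fiber_mul (s : Finset ι) (φ : ι → κ) (v : ι → ℝ) (h : κ → ℝ) :
    ∑ x ∈ s.image φ, (∑ i ∈ s with φ i = x, v i) * h x = ∑ i ∈ s, v i * h (φ i) := by
  simp_rw [sum_mul]
  rw [← sum_fiberwise_of_maps_to (fun i hi => mem_image_of_mem φ hi)]
  exact sum_congr rfl fun x _ => sum_congr rfl fun i hi => by rw [(mem_filter.1 hi).2]

theorem simForm_image_fiber (s : Finset ι) (φ : ι → X) (v : ι → ℝ) :
    simForm (s.image φ) id (fun x => ∑ i ∈ s with φ i = x, v i)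
      (fun x => ∑ i ∈ s with φ i = x, v i) = simForm s φ v v := by
  simp only [simForm, id]
  simp_rw [mul_comm (Real.exp _), sum_image_sum_fiber_mul s φ v (fun y => Real.exp (-dist _ y))]
  rw [sum_image_sum_fiber_mul s φ v]

theorem sq_sum_div_simForm_le_finMag_image (hX : IsPosDefSpace X) (s : Finset ι) (φ : ι → X)
    (v : ι → ℝ) : (∑ i ∈ s, v i) ^ 2 / simForm s φ v v ≤ finMag (s.image φ) := by
  have hsum := sum_image_sum_fiber_mul s φ v 1
  simp only [Pi.one_apply, mul_one] at hsum
  rw [← hsum, ← simForm_image_fiber]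
  exact div_le_of_le_mul₀ (simForm_self_nonneg hX _ _) (finMag_nonneg hX _)
    (sq_sum_le_finMag_mul_simForm hX _ _)

theorem eventually_lt_finMag_image (hX : IsPosDefSpace X) {F : Finset X} {c : ℝ}
    (hc : c < finMag F) : ∀ᶠ y : F → X in 𝓝 Subtype.val, c < finMag (univ.image y) := by
  rcases lt_or_ge c 0 with hc0 | hc0
  · exact Eventually.of_forall fun y => hc0.trans_le (finMag_nonneg hX _)
  have hm : 0 < finMag F := hc0.trans_lt hc
  obtain ⟨u, hu⟩ := exists_isWeighting hX F
  have hsum : ∑ p : F, u p = finMag F := by rw [hu.finMag_eq_sum, sum_coe_sort F u]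
  have hform : simForm univ Subtype.val (fun p : F => u p) (fun p => u p) = finMag F := by
    rw [simForm_univ_val, hu.finMag_eq_simForm]
  have hcont : Continuous fun y : F → X => simForm univ y (fun p => u p) (fun p => u p) := by
    unfold simForm
    fun_prop
  have hlim : Tendsto
      (fun y : F → X => finMag F ^ 2 / simForm univ y (fun p => u p) (fun p => u p))
      (𝓝 Subtype.val) (𝓝 (finMag F)) := by
    have h := (tendsto_const_nhds (x := finMag F ^ 2)).div
      (hcont.tendsto Subtype.val) (hform.symm ▸ hm.ne')
    rwa [hform, sq, mul_div_cancel_right₀ _ hm.ne', ← sq] at h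
  filter_upwards [hlim.eventually (lt_mem_nhds hc)] with y hy
  have hy' := sq_sum_div_simForm_le_finMag_image hX univ y fun p => u p
  rw [hsum] at hy'
  exact hy.trans_le hy'

end Perturbation

section CompactMagnitude

variable {X : Type*} [MetricSpace X]

theorem IsTractable.properSpace (hX : IsTractable X) : ProperSpace X :=
  ⟨fun x r => (hX.2 x r).1⟩

theorem IsTractable.bddAbove_finMag [Nonempty X] (hX : IsTractable X) {S : Set X}
    (hS : Bornology.IsBounded S) :
    BddAbove {m : ℝ | ∃ F : Finset X, ↑F ⊆ S ∧ m = finMag F} := by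
  obtain ⟨r, hr⟩ := hS.subset_closedBall (Classical.arbitrary X)
  refine (hX.2 (Classical.arbitrary X) r).2.mono ?_
  rintro _ ⟨F, hF, rfl⟩
  exact ⟨F, hF.trans hr, rfl⟩

theorem finMag_le_cMag [Nonempty X] (hX : IsTractable X) {S : Set X}
    (hS : Bornology.IsBounded S) {F : Finset X} (hF : ↑F ⊆ S) : finMag F ≤ cMag S :=
  le_csSup (hX.bddAbove_finMag hS) ⟨F, hF, rfl⟩

theorem cMag_mono [Nonempty X] (hX : IsTractable X) {S T : Set X}
    (hT : Bornology.IsBounded T) (hST : S ⊆ T) : cMag S ≤ cMag T :=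
  csSup_le_csSup (hX.bddAbove_finMag hT) ⟨finMag ∅, ∅, by simp, rfl⟩
    fun _ ⟨F, hF, e⟩ => ⟨F, hF.trans hST, e⟩

theorem exists_lt_finMag_of_lt_cMag {S : Set X} {c : ℝ} (hc : c < cMag S) :
    ∃ F : Finset X, ↑F ⊆ S ∧ c < finMag F := by
  obtain ⟨_, ⟨F, hF, rfl⟩, hcF⟩ :=
    exists_lt_of_lt_csSup (s := {m : ℝ | ∃ F : Finset X, ↑F ⊆ S ∧ m = finMag F})
      ⟨finMag ∅, ∅, by simp, rfl⟩ hc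
  exact ⟨F, hF, hcF⟩

end CompactMagnitude

namespace TopologicalSpace.NonemptyCompacts

variable {X : Type*} [MetricSpace X]

def cthickening [ProperSpace X] (K : NonemptyCompacts X) (r : ℝ) : NonemptyCompacts X :=
  ⟨⟨Metric.cthickening r K, K.isCompact.cthickening⟩,
    K.nonempty.mono (self_subset_cthickening _)⟩

theorem dist_cthickening_le [ProperSpace X] (K : NonemptyCompacts X) {r : ℝ} (hr : 0 ≤ r) :
    dist (K.cthickening r) K ≤ r := by
  refine (edist_le_ofReal hr).1 (hausdorffEDist_le_of_infEDist (fun x hx => ?_) fun x hx => ?_)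
  · exact mem_cthickening_iff.1 hx
  · exact (infEDist_zero_of_mem (self_subset_cthickening (K : Set X) hx)).trans_le bot_le

theorem tendsto_cthickening_nhdsGT_zero [ProperSpace X] (K : NonemptyCompacts X) :
    Tendsto K.cthickening (𝓝[>] 0) (𝓝 K) :=
  tendsto_iff_dist_tendsto_zero.2 <| squeeze_zero' (Eventually.of_forall fun _ => dist_nonneg)
    (eventually_nhdsWithin_of_forall fun _ hr => K.dist_cthickening_le (le_of_lt hr))
    (tendsto_id.mono_left nhdsWithin_le_nhds)

theorem subset_cthickening_of_dist_le {K L : NonemptyCompacts X} {δ : ℝ} (h : dist L K ≤ δ) :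
    (L : Set X) ⊆ Metric.cthickening δ K := fun _ hx =>
  mem_cthickening_iff.2 <| (infEDist_le_hausdorffEDist_of_mem hx).trans <|
    (edist_le_ofReal (dist_nonneg.trans h)).2 h

end TopologicalSpace.NonemptyCompacts

section Semicontinuity

variable {X : Type*} [MetricSpace X]

theorem lowerSemicontinuous_cMag (hX : IsTractable X) :
    LowerSemicontinuous fun L : NonemptyCompacts X => cMag (L : Set X) := by
  classical
  intro K c hc
  have : Nonempty X := ⟨K.nonempty.some⟩
  obtain ⟨F, hFK, hcF⟩ := exists_lt_finMag_of_lt_cMag hc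
  obtain ⟨η, hη, hnear⟩ := Metric.eventually_nhds_iff.1 (eventually_lt_finMag_image hX.1 hcF)
  filter_upwards [ball_mem_nhds K hη] with L hL
  have hclose : ∀ p : F, ∃ q ∈ (L : Set X), dist q p < η := fun p => by
    rw [mem_ball, dist_comm] at hL
    obtain ⟨q, hq, hpq⟩ := exists_dist_lt_of_hausdorffDist_lt (hFK p.2) hL (edist_ne_top K L)
    exact ⟨q, hq, dist_comm p.1 q ▸ hpq⟩
  choose y hyL hyd using hclose
  refine (hnear ((dist_pi_lt_iff hη).2 hyd)).trans_le
    (finMag_le_cMag hX L.isCompact.isBounded fun x hx => ?_)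
  obtain ⟨p, -, rfl⟩ := Finset.mem_image.1 hx
  exact hyL p

theorem upperSemicontinuousAt_cMag (hX : IsTractable X) (K : NonemptyCompacts X)
    (h : ∀ ε : ℝ, 0 < ε → ∃ δ : ℝ, 0 < δ ∧
      cMag (Metric.cthickening δ (K : Set X)) < cMag (K : Set X) + ε) :
    UpperSemicontinuousAt (fun L : NonemptyCompacts X => cMag (L : Set X)) K := by
  intro y hy
  have : Nonempty X := ⟨K.nonempty.some⟩
  obtain ⟨δ, hδ, hlt⟩ := h (y - cMag (K : Set X)) (sub_pos.2 hy)
  filter_upwards [closedBall_mem_nhds K hδ] with L hL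
  calc cMag (L : Set X) ≤ cMag (Metric.cthickening δ (K : Set X)) :=
        cMag_mono hX K.isCompact.isBounded.cthickening
          (NonemptyCompacts.subset_cthickening_of_dist_le hL)
    _ < y := by linarith

end Semicontinuity

theorem stmt0 {M : Type*} [MetricSpace M] (hM : IsTractable M)
    (K : NonemptyCompacts M) :
    List.TFAE
      [ContinuousAt (fun L : NonemptyCompacts M => cMag (L : Set M)) K,
       Tendsto (fun r : ℝ => cMag (Metric.cthickening r (K : Set M))) (𝓝[>] 0)
         (𝓝 (cMag (K : Set M))),
       ∀ ε : ℝ, 0 < ε → ∃ δ : ℝ, 0 < δ ∧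
         cMag (Metric.cthickening δ (K : Set M)) < cMag (K : Set M) + ε] := by
  have := hM.properSpace
  tfae_have 1 → 2 := fun h => h.tendsto.comp K.tendsto_cthickening_nhdsGT_zero
  tfae_have 2 → 3 := fun h ε hε =>
    ((h.eventually (gt_mem_nhds (lt_add_of_pos_right _ hε))).and self_mem_nhdsWithin).exists.imp
      fun _ hδ => ⟨hδ.2, hδ.1⟩
  tfae_have 3 → 1 := fun h => continuousAt_iff_lower_upperSemicontinuousAt.2
    ⟨(lowerSemicontinuous_cMag hM).lowerSemicontinuousAt K, upperSemicontinuousAt_cMag hM K h⟩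
  tfae_finish
end

section
/- Let N ∈ ℕ, let F be a nonempty skew finite subset of ℓ1^N, let r ∈ (0, skew(F)/2), let p, q ∈ F and t ∈ [−1,1]^N. Then (1/2^N) ∫_{ℝ^N} e^{−d1(x, q+rt)} dμ_{p,r}(x) = e^{−d1(C̄_p(r), q+rt)}, where d1(A, y) denotes the infimum of d1-distances from points of A to y. -/
open MeasureTheory Metric Set Filter Topology
open scoped ENNReal

/-- The 1-metric on `ℝ^N`. -/
noncomputable def d1 {N : ℕ} (x y : Fin N → ℝ) : ℝ := ∑ k, |x k - y k|

/-- The infimum of 1-distances from points of `A` to `y`. -/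
noncomputable def d1Inf {N : ℕ} (A : Set (Fin N → ℝ)) (y : Fin N → ℝ) : ℝ :=
  sInf ((fun z => d1 z y) '' A)

/-- The skewness of a set `S ⊆ ℝ^N`. -/
noncomputable def skewness {N : ℕ} (S : Set (Fin N → ℝ)) : ℝ≥0∞ :=
  ⨅ (a : S) (b : S) (_ : a ≠ b) (k : Fin N), ENNReal.ofReal |a.1 k - b.1 k|

/-- A set is skew when its skewness is positive. -/
def IsSkew {N : ℕ} (S : Set (Fin N → ℝ)) : Prop := 0 < skewness S

/-- The closed cube with center `p` and "radius" `r`. -/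
def cube {N : ℕ} (p : Fin N → ℝ) (r : ℝ) : Set (Fin N → ℝ) :=
  {x | ∀ k, x k ∈ Set.Icc (p k - r) (p k + r)}

/-- The product measure `⊗_k (δ_{p_k - r} + δ_{p_k + r} + Leb|_{[p_k - r, p_k + r]})`. -/
noncomputable def cubeMeasure {N : ℕ} (p : Fin N → ℝ) (r : ℝ) :
    Measure (Fin N → ℝ) :=
  Measure.pi fun k =>
    Measure.dirac (p k - r) + Measure.dirac (p k + r) +
      volume.restrict (Set.Icc (p k - r) (p k + r))

/-!
Both sides factor over the coordinates. In `ℓ1^N` the distance from `y` to the cube is attained at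
the coordinatewise nearest point `m k = max (p k - r) (min (p k + r) (y k))`. In one dimension,
splitting `[a, b]` at the nearest point `m` to `c` gives
`∫ s in a..b, exp (-|s - c|) = 2 exp (-|m - c|) - exp (-|a - c|) - exp (-|b - c|)`,
and the atoms at `a` and `b` exactly cancel the boundary terms.
-/

namespace Real

lemma hasDerivAt_exp_neg_abs_sub_of_lt {s c : ℝ} (h : s < c) :
    HasDerivAt (fun x => exp (-|x - c|)) (exp (-|s - c|)) s := by
  have hexp : HasDerivAt (fun x => exp (x - c)) (exp (s - c)) s := by
    simpa using ((hasDerivAt_id s).sub_const c).exp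
  have heq : (fun x => exp (-|x - c|)) =ᶠ[𝓝 s] fun x => exp (x - c) := by
    filter_upwards [Iio_mem_nhds h] with x hx
    rw [abs_of_neg (sub_neg.mpr hx), neg_neg]
  rw [abs_of_neg (sub_neg.mpr h), neg_neg]
  exact hexp.congr_of_eventuallyEq heq

lemma hasDerivAt_exp_neg_abs_sub_of_gt {s c : ℝ} (h : c < s) :
    HasDerivAt (fun x => exp (-|x - c|)) (-exp (-|s - c|)) s := by
  have hexp : HasDerivAt (fun x => exp (-(x - c))) (-exp (-(s - c))) s := by
    simpa using ((hasDerivAt_id s).sub_const c).neg.exp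
  have heq : (fun x => exp (-|x - c|)) =ᶠ[𝓝 s] fun x => exp (-(x - c)) := by
    filter_upwards [Ioi_mem_nhds h] with x hx
    rw [abs_of_pos (sub_pos.mpr hx)]
  rw [abs_of_pos (sub_pos.mpr h)]
  exact hexp.congr_of_eventuallyEq heq

lemma continuous_exp_neg_abs_sub (c : ℝ) : Continuous fun x => exp (-|x - c|) := by
  fun_prop

lemma integral_Icc_exp_neg_abs_sub {a b : ℝ} (hab : a ≤ b) (c : ℝ) :
    ∫ s in Icc a b, exp (-|s - c|) =
      2 * exp (-|max a (min b c) - c|) - exp (-|a - c|) - exp (-|b - c|) := by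
  set f : ℝ → ℝ := fun x => exp (-|x - c|)
  set m := max a (min b c)
  have hf := continuous_exp_neg_abs_sub c
  have ham : a ≤ m := le_max_left _ _
  have hmb : m ≤ b := max_le hab (min_le_left _ _)
  have hleft : ∫ s in a..m, f s = f m - f a :=
    intervalIntegral.integral_eq_sub_of_hasDerivAt_of_le ham hf.continuousOn
      (fun s hs => hasDerivAt_exp_neg_abs_sub_of_lt
        (((lt_max_iff.mp hs.2).resolve_left hs.1.not_gt).trans_le (min_le_right _ _)))
      (hf.intervalIntegrable _ _)
  have hright : ∫ s in m..b, f s = -f b - -f m :=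
    intervalIntegral.integral_eq_sub_of_hasDerivAt_of_le hmb hf.neg.continuousOn
      (fun s hs => by
        simpa using (hasDerivAt_exp_neg_abs_sub_of_gt
          ((min_lt_iff.mp ((le_max_right a _).trans_lt hs.1)).resolve_left hs.2.not_gt)).neg)
      (hf.intervalIntegrable _ _)
  rw [integral_Icc_eq_integral_Ioc, ← intervalIntegral.integral_of_le hab,
    ← intervalIntegral.integral_add_adjacent_intervals (hf.intervalIntegrable a m)
      (hf.intervalIntegrable m b), hleft, hright]
  ring

lemma integral_exp_neg_abs_sub_dirac_add_dirac_add_restrict_Icc {a b : ℝ} (hab : a ≤ b) (c : ℝ) :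
    ∫ s, exp (-|s - c|) ∂(Measure.dirac a + Measure.dirac b + volume.restrict (Icc a b)) =
      2 * exp (-|max a (min b c) - c|) := by
  have hint : ∀ (μ : Measure ℝ) [IsFiniteMeasure μ], Integrable (fun s => exp (-|s - c|)) μ :=
    fun μ _ => .of_bound (continuous_exp_neg_abs_sub c).aestronglyMeasurable 1 <| .of_forall
      fun s => by simp
  rw [integral_add_measure (hint _) (hint _), integral_add_measure (hint _) (hint _),
    integral_dirac, integral_dirac, integral_Icc_exp_neg_abs_sub hab]
  ring

end Real

lemma abs_max_min_sub_le {a b x y : ℝ} (hx : x ∈ Icc a b) :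
    |max a (min b y) - y| ≤ |x - y| := by
  obtain ⟨hax, hxb⟩ := hx
  rcases le_total y a with hya | hay
  · rw [min_eq_right (hya.trans (hax.trans hxb)), max_eq_left hya, abs_of_nonneg (by linarith),
      abs_of_nonneg (by linarith)]
    linarith
  rcases le_total b y with hby | hyb
  · rw [min_eq_left hby, max_eq_right (hax.trans hxb), abs_of_nonpos (by linarith),
      abs_of_nonpos (by linarith)]
    linarith
  · rw [min_eq_right hyb, max_eq_right hay, sub_self, abs_zero]
    exact abs_nonneg _

lemma d1Inf_cube {N : ℕ} (p : Fin N → ℝ) {r : ℝ} (hr : 0 ≤ r) (y : Fin N → ℝ) :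
    d1Inf (cube p r) y = ∑ k, |max (p k - r) (min (p k + r) (y k)) - y k| := by
  set z : Fin N → ℝ := fun k => max (p k - r) (min (p k + r) (y k))
  have hz : z ∈ cube p r := fun k => ⟨le_max_left _ _, max_le (by linarith) (min_le_left _ _)⟩
  refine le_antisymm (csInf_le ⟨0, ?_⟩ ⟨z, hz, rfl⟩) (le_csInf ⟨_, z, hz, rfl⟩ ?_)
  · rintro _ ⟨x, -, rfl⟩
    exact Finset.sum_nonneg fun k _ => abs_nonneg _
  · rintro _ ⟨x, hx, rfl⟩
    exact Finset.sum_le_sum fun k _ => abs_max_min_sub_le (hx k)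

lemma exp_neg_d1 {N : ℕ} (x y : Fin N → ℝ) :
    Real.exp (-d1 x y) = ∏ k, Real.exp (-|x k - y k|) := by
  rw [d1, ← Finset.sum_neg_distrib, Real.exp_sum]

lemma integral_exp_neg_d1_cubeMeasure {N : ℕ} (p : Fin N → ℝ) {r : ℝ} (hr : 0 ≤ r)
    (y : Fin N → ℝ) :
    ∫ x, Real.exp (-d1 x y) ∂(cubeMeasure p r) = 2 ^ N * Real.exp (-d1Inf (cube p r) y) := by
  simp_rw [exp_neg_d1, cubeMeasure]
  rw [integral_fintype_prod_eq_prod (f := fun k s => Real.exp (-|s - y k|)),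
    Finset.prod_congr rfl fun k _ =>
      Real.integral_exp_neg_abs_sub_dirac_add_dirac_add_restrict_Icc (by linarith) (y k),
    Finset.prod_mul_distrib, Finset.prod_const, Finset.card_univ, Fintype.card_fin,
    ← Real.exp_sum, Finset.sum_neg_distrib, d1Inf_cube p hr]

theorem stmt5_general {N : ℕ} (r : ℝ) (hr : 0 < r) (p : Fin N → ℝ) (q : Fin N → ℝ) (t : Fin N → ℝ) :
    (1 / 2 ^ N) * ∫ x, Real.exp (-d1 x (q + r • t)) ∂(cubeMeasure p r) =
      Real.exp (-d1Inf (cube p r) (q + r • t)) := by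
  rw [integral_exp_neg_d1_cubeMeasure p hr.le]
  field_simp

theorem stmt5 {N : ℕ} (F : Finset (Fin N → ℝ)) (hF : F.Nonempty)
    (hskew : IsSkew (F : Set (Fin N → ℝ)))
    (r : ℝ) (hr : 0 < r)
    (hr' : ENNReal.ofReal (2 * r) < skewness (F : Set (Fin N → ℝ)))
    (p : Fin N → ℝ) (hp : p ∈ F) (q : Fin N → ℝ) (hq : q ∈ F)
    (t : Fin N → ℝ) (ht : ∀ k, t k ∈ Set.Icc (-1 : ℝ) 1) :
    (1 / 2 ^ N) * ∫ x, Real.exp (-d1 x (q + r • t)) ∂(cubeMeasure p r) =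
      Real.exp (-d1Inf (cube p r) (q + r • t)) :=
  stmt5_general r hr p q t
end

section
/- Let N ∈ ℕ, let F be a nonempty skew finite subset of ℓ1^N, let r ∈ (0, skew(F)/2), let p, q ∈ F, s, t ∈ [−1,1]^N and u ∈ {−1,1}^N. If p ∈ cn(q,u), then d1(p + rs, q + rt) = d1(p + rs, q + ru) + d1(ru, rt) and d1(C̄_p(r), q + rt) = d1(C̄_p(r), q + ru) + d1(ru, rt), where d1(A, y) denotes the infimum of d1-distances from points of A to y. -/
open Metric Set Filter Topology
open scoped ENNReal Classical

/-- The sign vector associated to `s : Fin N → Bool` (`true ↦ 1`, `false ↦ -1`). -/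
def sgnVec {N : ℕ} (s : Fin N → Bool) : Fin N → ℝ := fun k => if s k then 1 else -1

/-- The `u`-corner of `F` at `q`. -/
noncomputable def corner {N : ℕ} (F : Finset (Fin N → ℝ)) (q : Fin N → ℝ)
    (u : Fin N → Bool) : Finset (Fin N → ℝ) :=
  F.filter fun p => ∀ k, Real.sign (p k - q k) = sgnVec u k

/-! Since `p ∈ cn(q, u)` and `2r < skew(F)`, on every axis `u_k (p_k - q_k) > 2r`, so the point
`q_k + r u_k` lies between any point of `[p_k - r, p_k + r]` and any point of `[q_k - r, q_k + r]`.
Distances along a line add through an intermediate point, and the 1-distance is the sum over the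
axes. As this holds for every point `p + r s` of the cube, the infimum over the cube shifts by the
same constant. -/

theorem Real.sign_mul_self_eq_abs (x : ℝ) : Real.sign x * x = |x| := by
  rcases lt_trichotomy x 0 with hx | rfl | hx
  · rw [Real.sign_of_neg hx, abs_of_neg hx, neg_one_mul]
  · simp
  · rw [Real.sign_of_pos hx, abs_of_pos hx, one_mul]

section d1

variable {N : ℕ}

theorem d1_add_left (q x y : Fin N → ℝ) : d1 (q + x) (q + y) = d1 x y := by
  simp only [d1, Pi.add_apply, add_sub_add_left_eq_sub]

theorem d1_eq_add_of_mul_nonneg {x y z : Fin N → ℝ}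
    (h : ∀ k, 0 ≤ (x k - y k) * (y k - z k)) : d1 x z = d1 x y + d1 y z := by
  simp only [d1, ← Finset.sum_add_distrib]
  refine Finset.sum_congr rfl fun k _ => ?_
  rw [← abs_add_eq_add_abs_iff _ _ |>.mpr (mul_nonneg_iff.mp (h k)), sub_add_sub_cancel]

theorem d1Inf_eq_add_of_forall_d1_eq {A : Set (Fin N → ℝ)} (hA : A.Nonempty)
    {y y' : Fin N → ℝ} {c : ℝ} (h : ∀ x ∈ A, d1 x y' = d1 x y + c) :
    d1Inf A y' = d1Inf A y + c := by
  have : Nonempty A := hA.to_subtype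
  have hbdd : BddBelow (Set.range fun x : A => d1 x y) :=
    ⟨0, by rintro _ ⟨x, rfl⟩; exact Finset.sum_nonneg fun k _ => abs_nonneg _⟩
  simp only [d1Inf, Set.image_eq_range]
  exact (congrArg iInf (funext fun x : A => h x x.2)).trans (ciInf_add hbdd c).symm

end d1

section corner

variable {N : ℕ}

theorem lt_abs_sub_of_ofReal_lt_skewness {S : Set (Fin N → ℝ)} {a b : Fin N → ℝ}
    (ha : a ∈ S) (hb : b ∈ S) (hab : a ≠ b) {d : ℝ} (hd : ENNReal.ofReal d < skewness S)
    (k : Fin N) : d < |a k - b k| := by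
  have hle : skewness S ≤ ENNReal.ofReal |a k - b k| :=
    iInf_le_of_le ⟨a, ha⟩ <| iInf_le_of_le ⟨b, hb⟩ <|
      iInf_le_of_le (fun h => hab (congrArg Subtype.val h)) <| iInf_le _ k
  exact (ENNReal.ofReal_lt_ofReal_iff'.mp (hd.trans_le hle)).1

theorem sign_sub_of_mem_corner {F : Finset (Fin N → ℝ)} {p q : Fin N → ℝ} {u : Fin N → Bool}
    (hp : p ∈ corner F q u) (k : Fin N) : Real.sign (p k - q k) = sgnVec u k :=
  (Finset.mem_filter.mp hp).2 k

theorem lt_sgnVec_mul_sub_of_mem_corner {F : Finset (Fin N → ℝ)} {p q : Fin N → ℝ}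
    {u : Fin N → Bool} (hq : q ∈ F) (hp : p ∈ corner F q u) {d : ℝ}
    (hd : ENNReal.ofReal d < skewness (F : Set (Fin N → ℝ))) (k : Fin N) :
    d < sgnVec u k * (p k - q k) := by
  have hpq : p ≠ q := by
    rintro rfl
    have := sign_sub_of_mem_corner hp k
    rw [sub_self, Real.sign_zero, sgnVec] at this
    split_ifs at this <;> norm_num at this
  rw [← sign_sub_of_mem_corner hp k, Real.sign_mul_self_eq_abs]
  exact lt_abs_sub_of_ofReal_lt_skewness (Finset.mem_filter.mp hp).1 hq hpq hd k

end corner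

section cube

variable {N : ℕ} {p x : Fin N → ℝ} {r : ℝ}

theorem self_mem_cube (hr : 0 ≤ r) : p ∈ cube p r :=
  fun _ => ⟨by linarith, by linarith⟩

theorem exists_eq_add_smul_of_mem_cube (hr : 0 < r) (hx : x ∈ cube p r) :
    ∃ s : Fin N → ℝ, (∀ k, s k ∈ Set.Icc (-1 : ℝ) 1) ∧ x = p + r • s := by
  refine ⟨r⁻¹ • (x - p), fun k => ?_, by rw [smul_inv_smul₀ hr.ne', add_sub_cancel]⟩
  obtain ⟨h₁, h₂⟩ := hx k
  simp only [Pi.smul_apply, Pi.sub_apply, smul_eq_mul, Set.mem_Icc]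
  constructor
  · rw [le_inv_mul_iff₀ hr]; linarith
  · rw [inv_mul_le_iff₀ hr]; linarith

end cube

theorem d1_eq_add_of_two_mul_le_sgnVec_mul_sub {N : ℕ} {p q s t : Fin N → ℝ} {r : ℝ}
    {u : Fin N → Bool} (hr : 0 ≤ r) (hpq : ∀ k, 2 * r ≤ sgnVec u k * (p k - q k))
    (hs : ∀ k, s k ∈ Set.Icc (-1 : ℝ) 1) (ht : ∀ k, t k ∈ Set.Icc (-1 : ℝ) 1) :
    d1 (p + r • s) (q + r • t) =
      d1 (p + r • s) (q + r • sgnVec u) + d1 (r • sgnVec u) (r • t) := by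
  rw [← d1_add_left q (r • sgnVec u) (r • t)]
  refine d1_eq_add_of_mul_nonneg fun k => ?_
  obtain ⟨hs₁, hs₂⟩ := hs k
  obtain ⟨ht₁, ht₂⟩ := ht k
  have hk := hpq k
  simp only [Pi.add_apply, Pi.smul_apply, smul_eq_mul, sgnVec] at hk ⊢
  split_ifs at hk ⊢
  · exact mul_nonneg (by nlinarith) (by nlinarith)
  · exact mul_nonneg_of_nonpos_of_nonpos (by nlinarith) (by nlinarith)

theorem stmt7_general {N : ℕ} (F : Finset (Fin N → ℝ))
    (r : ℝ) (hr : 0 < r)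
    (hr' : ENNReal.ofReal (2 * r) < skewness (F : Set (Fin N → ℝ)))
    (p q : Fin N → ℝ) (hq : q ∈ F)
    (s t : Fin N → ℝ) (hs : ∀ k, s k ∈ Set.Icc (-1 : ℝ) 1)
    (ht : ∀ k, t k ∈ Set.Icc (-1 : ℝ) 1)
    (u : Fin N → Bool) (hpu : p ∈ corner F q u) :
    d1 (p + r • s) (q + r • t) =
      d1 (p + r • s) (q + r • sgnVec u) + d1 (r • sgnVec u) (r • t) ∧
    d1Inf (cube p r) (q + r • t) =
      d1Inf (cube p r) (q + r • sgnVec u) + d1 (r • sgnVec u) (r • t) := by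
  have hpq k : 2 * r ≤ sgnVec u k * (p k - q k) :=
    (lt_sgnVec_mul_sub_of_mem_corner hq hpu hr' k).le
  refine ⟨d1_eq_add_of_two_mul_le_sgnVec_mul_sub hr.le hpq hs ht,
    d1Inf_eq_add_of_forall_d1_eq ⟨p, self_mem_cube hr.le⟩ fun x hx => ?_⟩
  obtain ⟨s', hs', rfl⟩ := exists_eq_add_smul_of_mem_cube hr hx
  exact d1_eq_add_of_two_mul_le_sgnVec_mul_sub hr.le hpq hs' ht

theorem stmt7 {N : ℕ} (F : Finset (Fin N → ℝ)) (hF : F.Nonempty)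
    (hskew : IsSkew (F : Set (Fin N → ℝ)))
    (r : ℝ) (hr : 0 < r)
    (hr' : ENNReal.ofReal (2 * r) < skewness (F : Set (Fin N → ℝ)))
    (p q : Fin N → ℝ) (hp : p ∈ F) (hq : q ∈ F)
    (s t : Fin N → ℝ) (hs : ∀ k, s k ∈ Set.Icc (-1 : ℝ) 1)
    (ht : ∀ k, t k ∈ Set.Icc (-1 : ℝ) 1)
    (u : Fin N → Bool) (hpu : p ∈ corner F q u) :
    d1 (p + r • s) (q + r • t) =
      d1 (p + r • s) (q + r • sgnVec u) + d1 (r • sgnVec u) (r • t) ∧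
    d1Inf (cube p r) (q + r • t) =
      d1Inf (cube p r) (q + r • sgnVec u) + d1 (r • sgnVec u) (r • t) :=
  stmt7_general F r hr hr' p q hq s t hs ht u hpu
end
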